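/- As formal power series (or for real t with |λt| < 1), the exponential generating function of the final degenerate sequence of the degenerate Euler–Seidel matrix satisfies ∑_{n≥0} a_{0,n}(λ) t^n/n! = e_λ^{1-λ}(t) · ∑_{n≥0} a_{n,0}(λ) t^n/n!, where e_λ^x(t) = ∑_{k≥0} (x)_{k,λ} t^k/k!. -/

import Mathlib

open Finset

/-- Generalized falling factorial `(x)_{n,lam} = x(x-lam)...(x-(n-1)lam)`. -/
noncomputable def dfall (lam x : ℝ) (n : ℕ) : ℝ := ∏ i ∈ Finset.range n, (x - i * lam)

/-- Generalized rising factorial `⟨x⟩_{n,lam} = x(x+lam)...(x+(n-1)lam)`. -/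
noncomputable def drise (lam x : ℝ) (n : ℕ) : ℝ := ∏ i ∈ Finset.range n, (x + i * lam)

lemma dfall_succ (lam x : ℝ) (i : ℕ) :
    dfall lam x (i + 1) = dfall lam x i * (x - i * lam) := by
  unfold dfall
  rw [Finset.prod_range_succ]

lemma dfall_succ' (lam x : ℝ) (i : ℕ) :
    dfall lam (x + lam) (i + 1) = dfall lam x i * (x + lam) := by
  unfold dfall
  rw [Finset.prod_range_succ']
  have h1 : ∀ m ∈ Finset.range i, (x + lam - (m + 1 : ℕ) * lam) = (x - m * lam) := by
    intro m _; push_cast; ring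
  rw [Finset.prod_congr rfl h1]
  norm_num

theorem stmt7 (lam : ℝ) (a : ℕ → ℝ) (A : ℕ → ℕ → ℝ)
    (hA0 : ∀ n : ℕ, A n 0 = a n)
    (hA : ∀ n k : ℕ, A n (k + 1) = (1 - ((k + 1 : ℝ) - (n : ℝ)) * lam) * A n k + A (n + 1) k) :
    PowerSeries.mk (fun n : ℕ => A 0 n / (n.factorial : ℝ)) =
      PowerSeries.mk (fun k : ℕ => dfall lam (1 - lam) k / (k.factorial : ℝ)) *
        PowerSeries.mk (fun n : ℕ => A n 0 / (n.factorial : ℝ)) := by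
  have key : ∀ k n : ℕ, A n k =
      ∑ i ∈ Finset.range (k + 1),
        (k.choose i : ℝ) * dfall lam (1 - lam + n * lam) i * a (n + k - i) := by
    intro k
    induction k with
    | zero =>
      intro n
      simp [dfall, hA0 n]
    | succ k ih =>
      intro n
      rw [hA n k, ih n, ih (n + 1)]
      -- rewrite the base of the shifted sum
      have hbase : (1 - lam + ((n : ℕ) + 1 : ℕ) * lam : ℝ) = (1 - lam + n * lam) + lam := by
        push_cast; ring
      -- split off the first term of the RHS sum
      rw [Finset.sum_range_succ' (fun j => ((k + 1).choose j : ℝ) *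
            dfall lam (1 - lam + n * lam) j * a (n + (k + 1) - j)) (k + 1)]
      -- split off the first term of the second LHS sum
      rw [Finset.sum_range_succ' (fun i => ((k).choose i : ℝ) *
            dfall lam (1 - lam + ((n : ℕ) + 1 : ℕ) * lam) i * a ((n + 1) + k - i)) k]
      -- extend the shifted LHS sum from range k to range (k+1)
      have hext : ∑ i ∈ Finset.range (k + 1),
            ((k).choose (i + 1) : ℝ) * dfall lam (1 - lam + ((n : ℕ) + 1 : ℕ) * lam) (i + 1) *
              a ((n + 1) + k - (i + 1))
          = ∑ i ∈ Finset.range k,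
            ((k).choose (i + 1) : ℝ) * dfall lam (1 - lam + ((n : ℕ) + 1 : ℕ) * lam) (i + 1) *
              a ((n + 1) + k - (i + 1)) := by
        rw [Finset.sum_range_succ]
        simp [Nat.choose_succ_self]
      rw [← hext, Finset.mul_sum, ← add_assoc, ← Finset.sum_add_distrib]
      have hconst : a ((n + 1) + k - 0) = a (n + (k + 1) - 0) := by
        congr 1; omega
      have hsum : ∑ i ∈ Finset.range (k + 1),
            ((1 - ((k : ℝ) + 1 - n) * lam) *
                ((k.choose i : ℝ) * dfall lam (1 - lam + n * lam) i * a (n + k - i)) +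
              ((k).choose (i + 1) : ℝ) * dfall lam (1 - lam + ((n : ℕ) + 1 : ℕ) * lam) (i + 1) *
                a ((n + 1) + k - (i + 1)))
          = ∑ i ∈ Finset.range (k + 1),
            (((k + 1).choose (i + 1) : ℝ) * dfall lam (1 - lam + n * lam) (i + 1) *
              a (n + (k + 1) - (i + 1))) := by
        apply Finset.sum_congr rfl
        intro i hi
        have hik : i ≤ k := Nat.lt_succ_iff.mp (Finset.mem_range.mp hi)
        have harg1 : (n + 1) + k - (i + 1) = n + k - i := by omega
        have harg2 : n + (k + 1) - (i + 1) = n + k - i := by omega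
        rw [harg1, harg2, hbase, dfall_succ' lam (1 - lam + n * lam) i,
          dfall_succ lam (1 - lam + n * lam) i]
        have hch : ((i : ℝ) + 1) * (k.choose (i + 1) : ℝ) = ((k : ℝ) - i) * (k.choose i : ℝ) := by
          have := Nat.choose_succ_right_eq k i
          have h2 : ((k.choose (i + 1) * (i + 1) : ℕ) : ℝ) = ((k.choose i * (k - i) : ℕ) : ℝ) := by
            exact_mod_cast congrArg (Nat.cast (R := ℝ)) this
          push_cast [Nat.cast_sub hik] at h2
          linarith [h2]
        have hch2 : (((k + 1).choose (i + 1) : ℕ) : ℝ) = (k.choose i : ℝ) + (k.choose (i + 1) : ℝ) := by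
          rw [Nat.choose_succ_succ]; push_cast; ring
        rw [hch2]
        linear_combination (dfall lam (1 - lam + n * lam) i * a (n + k - i) * lam) * hch
      rw [hsum, hconst]
      simp [dfall]
  ext n
  rw [PowerSeries.coeff_mk, PowerSeries.coeff_mul]
  rw [Finset.Nat.sum_antidiagonal_eq_sum_range_succ_mk]
  simp only [PowerSeries.coeff_mk, hA0]
  rw [key n 0]
  have hbase0 : (1 - lam + (0 : ℕ) * lam : ℝ) = 1 - lam := by push_cast; ring
  rw [hbase0, Finset.sum_div]
  apply Finset.sum_congr rfl
  intro i hi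
  have hik : i ≤ n := Nat.lt_succ_iff.mp (Finset.mem_range.mp hi)
  have harg : 0 + n - i = n - i := by omega
  rw [harg]
  have hfact : (n.choose i : ℝ) * (i.factorial : ℝ) * ((n - i).factorial : ℝ) = (n.factorial : ℝ) := by
    exact_mod_cast congrArg (Nat.cast (R := ℝ)) (Nat.choose_mul_factorial_mul_factorial hik)
  have h1 : (i.factorial : ℝ) ≠ 0 := Nat.cast_ne_zero.mpr (Nat.factorial_ne_zero i)
  have h2 : ((n - i).factorial : ℝ) ≠ 0 := Nat.cast_ne_zero.mpr (Nat.factorial_ne_zero (n - i))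
  have h3 : (n.factorial : ℝ) ≠ 0 := Nat.cast_ne_zero.mpr (Nat.factorial_ne_zero n)
  field_simp
  linear_combination (dfall lam (1 - lam) i * a (n - i)) * hfact
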